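/- In a hexagonal tiling of the torus (all tiles have 6 sides, the Euler characteristic is 0), every vertex is a full vertex of degree exactly 3 and the tiling is side-to-side; in particular there are no half vertices. -/
import Mathlib


/-- Combinatorial data of a hexagonal tiling of the torus: `f` tiles (all hexagons),
`e` edges, `v k` full vertices of degree `k` and `h l` half vertices of degree `l`
(finitely supported).  Full vertices have degree `≥ 3`, half vertices degree `≥ 2`.
The Euler characteristic of the torus is `0`, each tile has `6` sides plus one edge
for each half vertex on its boundary, each edge bounds two tiles, and the corners of
the `f` hexagons are distributed among the vertices according to degrees. -/
structure HexTorusTiling where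
  f : ℕ
  e : ℕ
  v : ℕ →₀ ℕ
  h : ℕ →₀ ℕ
  full_deg : ∀ k, k < 3 → v k = 0
  half_deg : ∀ l, l < 2 → h l = 0
  euler : ((v.sum fun _ a => (a : ℤ)) + (h.sum fun _ a => (a : ℤ))) - e + f = 0
  edge_count : 6 * f + (h.sum fun _ a => (a : ℤ)) = 2 * e
  corner_count : 6 * (f : ℤ)
    = (v.sum fun k a => (k : ℤ) * a) + (h.sum fun l a => (l : ℤ) * a)

/-- In a hexagonal tiling of the torus, every vertex is a full vertex of degree exactly 3:
there are no half vertices, and no full vertices of degree other than 3. -/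
theorem hex_torus_side_to_side_degree_three (T : HexTorusTiling) :
    (∀ l, T.h l = 0) ∧ (∀ k, k ≠ 3 → T.v k = 0) := by
  set V : ℤ := T.v.sum fun _ a => (a : ℤ) with hV
  set H : ℤ := T.h.sum fun _ a => (a : ℤ) with hH
  set KV : ℤ := T.v.sum fun k a => (k : ℤ) * a with hKV
  set LH : ℤ := T.h.sum fun l a => (l : ℤ) * a with hLH
  have hKVge : 3 * V ≤ KV := by
    rw [hV, hKV, Finsupp.sum, Finsupp.sum, Finset.mul_sum]
    refine Finset.sum_le_sum fun k hk => ?_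
    have hk3 : 3 ≤ k := by
      by_contra hlt
      exact (Finsupp.mem_support_iff.mp hk) (T.full_deg k (by omega))
    have : (3 : ℤ) ≤ (k : ℤ) := by exact_mod_cast hk3
    exact mul_le_mul_of_nonneg_right this (by positivity)
  have hLHge : 2 * H ≤ LH := by
    rw [hH, hLH, Finsupp.sum, Finsupp.sum, Finset.mul_sum]
    refine Finset.sum_le_sum fun l hl => ?_
    have hl2 : 2 ≤ l := by
      by_contra hlt
      exact (Finsupp.mem_support_iff.mp hl) (T.half_deg l (by omega))
    have : (2 : ℤ) ≤ (l : ℤ) := by exact_mod_cast hl2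
    exact mul_le_mul_of_nonneg_right this (by positivity)
  have hHnn : 0 ≤ H := by
    rw [hH, Finsupp.sum]
    exact Finset.sum_nonneg fun _ _ => by positivity
  have heuler := T.euler
  have hedge := T.edge_count
  have hcorn := T.corner_count
  -- From euler and edge_count: 2V + H = 4f
  have hVH : 2 * V + H = 4 * (T.f : ℤ) := by linarith
  -- corners: 6f = KV + LH ≥ 3V + 2H = 3V + 2(4f - 2V) = 8f - V, so V ≥ 2f; also V ≤ 2f
  have hHzero : H = 0 := by linarith
  have hVeq : 3 * V = KV := by linarith
  constructor
  · intro l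
    by_cases hl : l ∈ T.h.support
    · have := (Finset.sum_eq_zero_iff_of_nonneg
        (fun i _ => by positivity : ∀ i ∈ T.h.support, (0:ℤ) ≤ (T.h i : ℤ))).mp
        (by rw [hH, Finsupp.sum] at hHzero; exact hHzero) l hl
      exact_mod_cast this
    · exact Finsupp.notMem_support_iff.mp hl
  · intro k hk
    by_cases hkm : k ∈ T.v.support
    · have hzero : (T.v.sum fun k a => ((k : ℤ) - 3) * a) = 0 := by
        have : (T.v.sum fun k a => ((k : ℤ) - 3) * a)
            = KV - 3 * V := by
          rw [hKV, hV, Finsupp.sum, Finsupp.sum, Finsupp.sum, Finset.mul_sum,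
            ← Finset.sum_sub_distrib]
          exact Finset.sum_congr rfl fun i _ => by ring
        rw [this]; linarith
      rw [Finsupp.sum] at hzero
      have hterm := (Finset.sum_eq_zero_iff_of_nonneg
        (fun i hi => ?_ : ∀ i ∈ T.v.support, (0:ℤ) ≤ ((i : ℤ) - 3) * (T.v i : ℤ))).mp
        hzero k hkm
      · have hne : (T.v k : ℤ) ≠ 0 := by
          exact_mod_cast Finsupp.mem_support_iff.mp hkm
        have : (k : ℤ) - 3 = 0 := by
          rcases mul_eq_zero.mp hterm with h | h
          · exact h
          · exact absurd h hne
        exact absurd (by exact_mod_cast (by linarith : (k:ℤ) = 3)) hk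
      · have hi3 : 3 ≤ i := by
          by_contra hlt
          exact (Finsupp.mem_support_iff.mp hi) (T.full_deg i (by omega))
        have : (3:ℤ) ≤ (i:ℤ) := by exact_mod_cast hi3
        have := sub_nonneg.mpr this
        positivity
    · exact Finsupp.notMem_support_iff.mp hkm
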